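/- Let t₀ ∈ k* be an element that is not a root of unity, let a, b > 1 be coprime integers, and let p = (x_p, y_p) ∈ k̄² with x_p·y_p ≠ 0. Let φ ∈ Aut(𝔸²) be the automorphism φ(q) = (t₀^a·q₁, t₀^b·q₂). Then the Zariski closure of the orbit O_φ(p) = {(t₀^{na}·x_p, t₀^{nb}·y_p) : n ∈ ℤ} in k̄² equals the curve {q ∈ k̄² : q₁^b·y_p^a = q₂^a·x_p^b}. -/

import Mathlib

open MvPolynomial

noncomputable section

/-- Points of the affine plane over the algebraic closure of `k`. -/
abbrev Pt (k : Type*) [Field k] : Type _ := Fin 2 → AlgebraicClosure k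

/-- Plane automorphisms over `k`, modeled as `k`-algebra automorphisms of `k[x,y]`. -/
abbrev PlaneAut (k : Type*) [Field k] : Type _ :=
  MvPolynomial (Fin 2) k ≃ₐ[k] MvPolynomial (Fin 2) k

/-- The embedding of `k` in its algebraic closure. -/
abbrev emb (k : Type*) [Field k] : k →+* AlgebraicClosure k :=
  algebraMap k (AlgebraicClosure k)

variable {k : Type*} [Field k]

/-- The action of a plane automorphism on the points of the plane over `k̄`:
the point map of `φ` is `q ↦ (f(q), g(q))` where `f = φ.symm X₀`, `g = φ.symm X₁`
(so that `actp` is a left action of the automorphism group on points). -/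
def actp (φ : PlaneAut k) (q : Pt k) : Pt k :=
  fun i => aeval q (φ.symm (X i))

/-- The Zariski closure of a set of points of `k̄²`: the zero locus of the ideal of all
polynomials with coefficients in `k̄` vanishing on it. -/
def zclos (Δ : Set (Pt k)) : Set (Pt k) :=
  zeroLocus (AlgebraicClosure k) (vanishingIdeal (k := AlgebraicClosure k) Δ)

/-- `Δ̂` : the zero locus in `k̄²` of the ideal `I_k(Δ)` of all polynomials with
coefficients in `k` vanishing on `Δ`. -/
def hatSet (Δ : Set (Pt k)) : Set (Pt k) :=
  {q | ∀ P : MvPolynomial (Fin 2) k, (∀ x ∈ Δ, aeval x P = 0) → aeval q P = 0}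

/-- Coordinatewise action of the Galois group `Gal(k̄/k)` on points of `k̄²`. -/
def galAct (g : AlgebraicClosure k ≃ₐ[k] AlgebraicClosure k) (q : Pt k) : Pt k :=
  fun i => g (q i)

/-- A subset of `k̄²` is Zariski closed iff it is the zero locus of an ideal of `k̄[x,y]`. -/
def IsZClosed (S : Set (Pt k)) : Prop :=
  ∃ I : Ideal (MvPolynomial (Fin 2) (AlgebraicClosure k)), S = zeroLocus (AlgebraicClosure k) I

/-- Irreducibility with respect to the Zariski topology on `k̄²`. -/
def IsZIrreducible (S : Set (Pt k)) : Prop :=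
  S.Nonempty ∧ ∀ Z₁ Z₂ : Set (Pt k), IsZClosed Z₁ → IsZClosed Z₂ → S ⊆ Z₁ ∪ Z₂ →
    (S ⊆ Z₁ ∨ S ⊆ Z₂)

/-- `C` is an irreducible component of `S` (for the Zariski topology on `k̄²`):
a maximal irreducible subset of `S`. -/
def IsIrredComponentOf (C S : Set (Pt k)) : Prop :=
  IsZIrreducible C ∧ C ⊆ S ∧ ∀ C' : Set (Pt k), IsZIrreducible C' → C' ⊆ S → C ⊆ C' → C = C'

/-- The stabilizer `Aut(𝔸², Δ)` of a set of points of `k̄²`, as a set of plane automorphisms. -/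
def stabSet (Δ : Set (Pt k)) : Set (PlaneAut k) :=
  {φ | actp φ '' Δ = Δ}

/-- The orbit `O_H(p)` of a point under a subgroup of plane automorphisms. -/
def orbSub (H : Subgroup (PlaneAut k)) (p : Pt k) : Set (Pt k) :=
  {q | ∃ h ∈ H, actp h p = q}

/-- The orbit `O_φ(p) = {φⁿ(p) : n ∈ ℤ}` of a point under a single plane automorphism. -/
def orbAut (φ : PlaneAut k) (p : Pt k) : Set (Pt k) :=
  {q | ∃ n : ℤ, actp (φ ^ n) p = q}

/-- The degree of a plane automorphism: the maximum of the total degrees of the two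
polynomials giving its point map. -/
def autDegree (φ : PlaneAut k) : ℕ :=
  max (φ.symm (X 0)).totalDegree (φ.symm (X 1)).totalDegree

/-- The torus `T = {(x,y) ↦ (t·x, t⁻¹·y) : t ∈ k*}`, as a set of plane automorphisms. -/
def torusT (k : Type*) [Field k] : Set (PlaneAut k) :=
  {φ | ∃ t : k, t ≠ 0 ∧ ∀ q : Pt k, actp φ q = ![emb k t * q 0, (emb k t)⁻¹ * q 1]}

end


/-!
The orbit points `(t₀^{na} x_p, t₀^{nb} y_p)` satisfy `q₁^b y_p^a = q₂^a x_p^b`, which is one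
inclusion. Conversely, as `a` and `b` are coprime every point of that curve is
`(s^a x_p, s^b y_p)` for some `s`: writing `q = (w x_p, z y_p)`, so that `w^b = z^a`, take
`s = w^u z^v` where `ua + vb = 1`. Pulling back a polynomial that vanishes on the orbit along
`s ↦ (s^a x_p, s^b y_p)` gives a polynomial in one variable with the infinitely many roots
`t₀^n`, so it vanishes on the whole curve.
-/

section PointAction

variable {k : Type*} [Field k]

theorem aeval_actp (φ : PlaneAut k) (q : Pt k) (P : MvPolynomial (Fin 2) k) :
    aeval (actp φ q) P = aeval q (φ.symm P) := by
  have h : aeval (actp φ q) = (aeval q).comp φ.symm.toAlgHom :=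
    MvPolynomial.algHom_ext fun i => by simp [actp]
  exact DFunLike.congr_fun h P

theorem actp_mul (φ ψ : PlaneAut k) (q : Pt k) : actp (φ * ψ) q = actp φ (actp ψ q) := by
  funext i
  exact (aeval_actp ψ q _).symm

theorem actp_one (q : Pt k) : actp (1 : PlaneAut k) q = q := by
  funext i
  exact aeval_X q i

theorem actp_inv_actp (φ : PlaneAut k) (q : Pt k) : actp φ⁻¹ (actp φ q) = q := by
  rw [← actp_mul, inv_mul_cancel, actp_one]

variable {φ : PlaneAut k} {α β : AlgebraicClosure k}

theorem actp_pow_of_diag (hφ : ∀ q, actp φ q = ![α * q 0, β * q 1]) (n : ℕ) (q : Pt k) :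
    actp (φ ^ n) q = ![α ^ n * q 0, β ^ n * q 1] := by
  induction n with
  | zero =>
    rw [pow_zero, actp_one]
    ext i; fin_cases i <;> simp
  | succ n ih =>
    rw [pow_succ', actp_mul, ih, hφ]
    ext i; fin_cases i <;> simp [pow_succ', mul_assoc]

theorem actp_inv_of_diag (hα : α ≠ 0) (hβ : β ≠ 0)
    (hφ : ∀ q, actp φ q = ![α * q 0, β * q 1]) (q : Pt k) :
    actp φ⁻¹ q = ![α⁻¹ * q 0, β⁻¹ * q 1] := by
  have hq : actp φ ![α⁻¹ * q 0, β⁻¹ * q 1] = q := by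
    rw [hφ]; ext i; fin_cases i <;> simp [hα, hβ]
  conv_lhs => rw [← hq]
  rw [actp_inv_actp]

theorem actp_zpow_of_diag (hα : α ≠ 0) (hβ : β ≠ 0)
    (hφ : ∀ q, actp φ q = ![α * q 0, β * q 1]) (n : ℤ) (q : Pt k) :
    actp (φ ^ n) q = ![α ^ n * q 0, β ^ n * q 1] := by
  cases n with
  | ofNat n => simpa using actp_pow_of_diag hφ n q
  | negSucc n =>
    simp only [zpow_negSucc, ← inv_pow, actp_pow_of_diag (actp_inv_of_diag hα hβ hφ)]

theorem orbAut_eq_of_diag (hα : α ≠ 0) (hβ : β ≠ 0)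
    (hφ : ∀ q, actp φ q = ![α * q 0, β * q 1]) (p : Pt k) :
    orbAut φ p = {q | ∃ n : ℤ, q = ![α ^ n * p 0, β ^ n * p 1]} := by
  ext q
  simp only [orbAut, actp_zpow_of_diag hα hβ hφ, eq_comm, Set.mem_ofPred_eq]

end PointAction

section BinomialCurve

theorem exists_pow_eq_and_pow_eq_of_coprime {G : Type*} [CommGroup G] {a b : ℕ}
    (hab : a.Coprime b) {w z : G} (h : w ^ b = z ^ a) : ∃ s : G, s ^ a = w ∧ s ^ b = z := by
  obtain ⟨u, v, huv⟩ := Nat.isCoprime_iff_coprime.mpr hab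
  have hwz : ∀ m : ℤ, w ^ ((b : ℤ) * m) = z ^ ((a : ℤ) * m) := fun m => by
    rw [zpow_mul, zpow_mul, zpow_natCast, zpow_natCast, h]
  refine ⟨w ^ u * z ^ v, ?_, ?_⟩
  · rw [← zpow_natCast, mul_zpow, ← zpow_mul, ← zpow_mul, mul_comm v, ← hwz, ← zpow_add,
      show u * a + b * v = 1 by linear_combination huv, zpow_one]
  · rw [← zpow_natCast, mul_zpow, ← zpow_mul, ← zpow_mul, mul_comm u, hwz, ← zpow_add,
      show a * u + v * b = 1 by linear_combination huv, zpow_one]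

theorem exists_pow_eq_and_pow_eq_of_coprime₀ {G₀ : Type*} [CommGroupWithZero G₀] {a b : ℕ}
    (ha : a ≠ 0) (hb : b ≠ 0) (hab : a.Coprime b) {w z : G₀} (h : w ^ b = z ^ a) :
    ∃ s : G₀, s ^ a = w ∧ s ^ b = z := by
  by_cases hw : w = 0
  · have hz : z = 0 := pow_eq_zero_iff ha |>.mp (by rw [← h, hw, zero_pow hb])
    exact ⟨0, by rw [zero_pow ha, hw], by rw [zero_pow hb, hz]⟩
  have hz : z ≠ 0 := fun hz => hw (pow_eq_zero_iff hb |>.mp (by rw [h, hz, zero_pow ha]))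
  obtain ⟨s, hsa, hsb⟩ := exists_pow_eq_and_pow_eq_of_coprime hab
    (w := Units.mk0 w hw) (z := Units.mk0 z hz) (Units.ext (by simpa using h))
  exact ⟨s, by simpa using congrArg Units.val hsa, by simpa using congrArg Units.val hsb⟩

theorem exists_eq_pow_mul_and_eq_pow_mul {K : Type*} [Field K] {a b : ℕ} (ha : a ≠ 0)
    (hb : b ≠ 0) (hab : a.Coprime b) {x y u v : K} (hx : x ≠ 0) (hy : y ≠ 0)
    (h : u ^ b * y ^ a = v ^ a * x ^ b) : ∃ s : K, u = s ^ a * x ∧ v = s ^ b * y := by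
  obtain ⟨s, hsa, hsb⟩ := exists_pow_eq_and_pow_eq_of_coprime₀ ha hb hab
    (w := u / x) (z := v / y) (by rw [div_pow, div_pow, div_eq_div_iff (pow_ne_zero _ hx)
      (pow_ne_zero _ hy), h])
  exact ⟨s, by rw [hsa, div_mul_cancel₀ _ hx], by rw [hsb, div_mul_cancel₀ _ hy]⟩

theorem zpow_mul_pow_mul_eq_of_pow_eq {K : Type*} [Field K] {α β : K} {a b : ℕ}
    (h : α ^ b = β ^ a) (x y : K) (n : ℤ) :
    (α ^ n * x) ^ b * y ^ a = (β ^ n * y) ^ a * x ^ b := by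
  have hn : (α ^ n) ^ b = (β ^ n) ^ a := by
    rw [← zpow_natCast, ← zpow_natCast, ← zpow_mul, ← zpow_mul, mul_comm n, mul_comm n,
      zpow_mul, zpow_mul, zpow_natCast, zpow_natCast, h]
  rw [mul_pow, mul_pow, hn]
  ring

end BinomialCurve

section ZariskiClosure

variable {k : Type*} [Field k]

theorem zclos_mono {Δ Δ' : Set (Pt k)} (h : Δ ⊆ Δ') : zclos Δ ⊆ zclos Δ' :=
  zeroLocus_anti_mono (vanishingIdeal_anti_mono h)

theorem zclos_subset_binomial_curve {Δ : Set (Pt k)} {x y : AlgebraicClosure k} {a b : ℕ}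
    (h : ∀ q ∈ Δ, q 0 ^ b * y ^ a = q 1 ^ a * x ^ b) :
    zclos Δ ⊆ {q | q 0 ^ b * y ^ a = q 1 ^ a * x ^ b} := by
  intro q hq
  have hF := hq (X 0 ^ b * C (y ^ a) - X 1 ^ a * C (x ^ b)) fun r hr => by
    simpa [sub_eq_zero] using h r hr
  simpa [sub_eq_zero] using hF

theorem mem_zclos_image_of_polynomial_coords {γ : AlgebraicClosure k → Pt k}
    (hγ : ∀ i, ∃ f : Polynomial (AlgebraicClosure k), ∀ u, γ u i = f.eval u)
    {S : Set (AlgebraicClosure k)} (hS : S.Infinite) (s : AlgebraicClosure k) :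
    γ s ∈ zclos (γ '' S) := by
  choose f hf using hγ
  have hγP : ∀ P : MvPolynomial (Fin 2) (AlgebraicClosure k), ∀ u,
      aeval (γ u) P = (aeval f P).eval u := fun P u => by
    rw [← Polynomial.coe_aeval_eq_eval, ← AlgHom.comp_apply, comp_aeval]
    congr 2
    funext i
    rw [hf, Polynomial.coe_aeval_eq_eval]
  intro P hP
  have hQ : aeval f P = 0 := Polynomial.eq_zero_of_infinite_isRoot _ <|
    hS.mono fun u hu => by simpa [hγP] using hP (γ u) ⟨u, hu, rfl⟩
  rw [hγP, hQ, Polynomial.eval_zero]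

theorem mem_zclos_image_monomial_curve (x y : AlgebraicClosure k) (a b : ℕ)
    {S : Set (AlgebraicClosure k)} (hS : S.Infinite) (s : AlgebraicClosure k) :
    (![s ^ a * x, s ^ b * y] : Pt k) ∈ zclos ((fun u => ![u ^ a * x, u ^ b * y]) '' S) :=
  mem_zclos_image_of_polynomial_coords (Fin.forall_fin_two.mpr
    ⟨⟨Polynomial.C x * Polynomial.X ^ a, fun u => by simp [mul_comm x]⟩,
      ⟨Polynomial.C y * Polynomial.X ^ b, fun u => by simp [mul_comm y]⟩⟩) hS s

end ZariskiClosure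

theorem infinite_range_pow_of_pow_ne_one {K : Type*} [Field K] {t : K} (ht : t ≠ 0)
    (hru : ∀ n : ℕ, 0 < n → t ^ n ≠ 1) : (Set.range (t ^ · : ℕ → K)).Infinite := by
  refine Set.infinite_range_of_injective fun m n hmn => ?_
  wlog hle : m ≤ n generalizing m n
  · exact (this n m hmn.symm (le_of_not_ge hle)).symm
  obtain ⟨d, rfl⟩ := Nat.exists_eq_add_of_le hle
  have hd : t ^ d = 1 := by simpa [pow_add, ht] using hmn.symm
  by_contra hne
  exact hru d (by omega) hd

theorem stmt_19_general (k : Type*) [Field k]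
    (t₀ : k) (ht₀ : t₀ ≠ 0) (hru : ∀ n : ℕ, 0 < n → t₀ ^ n ≠ 1)
    (a b : ℕ) (ha : 1 < a) (hb : 1 < b) (hab : Nat.Coprime a b)
    (p : Pt k) (hp : p 0 * p 1 ≠ 0)
    (φ : PlaneAut k)
    (hφ : ∀ q : Pt k, actp φ q = ![emb k (t₀ ^ a) * q 0, emb k (t₀ ^ b) * q 1]) :
    orbAut φ p = {q : Pt k | ∃ n : ℤ,
      q = ![(emb k t₀) ^ (n * (a : ℤ)) * p 0, (emb k t₀) ^ (n * (b : ℤ)) * p 1]} ∧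
    zclos (orbAut φ p) = {q : Pt k | q 0 ^ b * p 1 ^ a = q 1 ^ a * p 0 ^ b} := by
  set t := emb k t₀
  have ht : t ≠ 0 := (map_ne_zero _).mpr ht₀
  have horb := orbAut_eq_of_diag (pow_ne_zero a ht) (pow_ne_zero b ht)
    (by simpa only [map_pow] using hφ) p
  have hpow (m : ℕ) (n : ℤ) : (t ^ m) ^ n = t ^ (n * m) := by rw [zpow_mul', zpow_natCast]
  refine ⟨by simp only [horb, hpow], (zclos_subset_binomial_curve ?_).antisymm
    fun q (hq : _ = _) => ?_⟩
  · rw [horb]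
    rintro _ ⟨n, rfl⟩
    exact zpow_mul_pow_mul_eq_of_pow_eq (by rw [← pow_mul, ← pow_mul, mul_comm]) _ _ n
  obtain ⟨s, hs0, hs1⟩ := exists_eq_pow_mul_and_eq_pow_mul (by omega) (by omega) hab
    (left_ne_zero_of_mul hp) (right_ne_zero_of_mul hp) hq
  have hqs : q = ![s ^ a * p 0, s ^ b * p 1] := by ext i; fin_cases i <;> simp [hs0, hs1]
  have hrange : (fun u => ![u ^ a * p 0, u ^ b * p 1]) '' Set.range (t ^ · : ℕ → _) ⊆
      orbAut φ p := by
    rintro _ ⟨_, ⟨n, rfl⟩, rfl⟩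
    exact horb ▸ ⟨n, by simp only [zpow_natCast, ← pow_mul, mul_comm n]⟩
  have hru' (n : ℕ) (hn : 0 < n) : t ^ n ≠ 1 := fun htn =>
    hru n hn ((emb k).injective (by simpa using htn))
  exact hqs ▸ zclos_mono hrange
    (mem_zclos_image_monomial_curve _ _ a b (infinite_range_pow_of_pow_ne_one ht hru') s)

/-- Let `t₀ ∈ k*` not be a root of unity, `a, b > 1` coprime,
`p = (x_p, y_p)` with `x_p·y_p ≠ 0`, and let `φ : q ↦ (t₀^a·q₁, t₀^b·q₂)`. Then
`O_φ(p) = {(t₀^{na}·x_p, t₀^{nb}·y_p) : n ∈ ℤ}` and its Zariski closure is the curve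
`{q : q₁^b·y_p^a = q₂^a·x_p^b}`. -/
theorem stmt_19 (k : Type*) [Field k] [PerfectField k]
    (t₀ : k) (ht₀ : t₀ ≠ 0) (hru : ∀ n : ℕ, 0 < n → t₀ ^ n ≠ 1)
    (a b : ℕ) (ha : 1 < a) (hb : 1 < b) (hab : Nat.Coprime a b)
    (p : Pt k) (hp : p 0 * p 1 ≠ 0)
    (φ : PlaneAut k)
    (hφ : ∀ q : Pt k, actp φ q = ![emb k (t₀ ^ a) * q 0, emb k (t₀ ^ b) * q 1]) :
    orbAut φ p = {q : Pt k | ∃ n : ℤ,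
      q = ![(emb k t₀) ^ (n * (a : ℤ)) * p 0, (emb k t₀) ^ (n * (b : ℤ)) * p 1]} ∧
    zclos (orbAut φ p) = {q : Pt k | q 0 ^ b * p 1 ^ a = q 1 ^ a * p 0 ^ b} :=
  stmt_19_general k t₀ ht₀ hru a b ha hb hab p hp φ hφ
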